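/- arXiv:1809.04005 — 2 statements merged into one kernel-verified Lean document; each statement's English description precedes it below -/
import Mathlib

section
/- Let k ∈ ℕ with k ≥ 1, α ∈ (k−1, k), a ∈ ℝ, and let ψ ∈ Ψ_k be such that the composition u ∘ ψ^{−1} belongs to C^{k,α}_{ψ(a)}. Then for every t > a one has D_a^{α,ψ} u(t) = D_{ψ(a)}^α (u ∘ ψ^{−1})(ψ(t)). -/
open MeasureTheory Set

noncomputable section

/-- The open interval `(a, +∞)` in `ℝ`, for an initial point `a ∈ ℝ ∪ {-∞}`
(encoded as `a : EReal`, with `a = ⊥` playing the role of `-∞`). -/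
def upSet (a : EReal) : Set ℝ := {τ : ℝ | a < (τ : EReal)}

/-- The closure of `(a, +∞)` in `ℝ`: it is `[a, +∞)` if `a ∈ ℝ`, and all of `ℝ` if `a = -∞`. -/
def upBar (a : EReal) : Set ℝ := {τ : ℝ | a ≤ (τ : EReal)}

/-- `f ∈ AC^{k-1}(s)`: the iterated derivatives of `f` of orders `0,…,k-1` (taken within `s`)
are absolutely continuous on `s`, i.e. each of them is the (locally integrable) indefinite
integral of the next one (fundamental theorem of calculus characterization of absolute
continuity). -/
def ACkOn (k : ℕ) (f : ℝ → ℝ) (s : Set ℝ) : Prop :=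
  ∀ j < k, ∀ x ∈ s, ∀ y ∈ s,
    IntervalIntegrable (iteratedDerivWithin (j + 1) f s) volume x y ∧
    iteratedDerivWithin j f s y - iteratedDerivWithin j f s x =
      ∫ τ in x..y, iteratedDerivWithin (j + 1) f s τ

/-- The space `C^{k,β}_a`: functions `f` with `f ∈ AC^{k-1}` on the closure of `(a,t)` and
`Θ_{k,β,f,t}(τ) = f^{(k)}(τ) (t-τ)^{k-β-1} ∈ L¹((a,t))`, for every real `t > a`. -/
def CkBeta (k : ℕ) (β : ℝ) (a : EReal) (f : ℝ → ℝ) : Prop :=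
  ∀ t : ℝ, a < (t : EReal) →
    ACkOn k f (upBar a ∩ Iic t) ∧
    IntegrableOn (fun τ : ℝ => iteratedDeriv k f τ * (t - τ) ^ ((k : ℝ) - β - 1))
      (upSet a ∩ Iio t)

/-- The Caputo derivative `D_a^α u (t) = (1/Γ(k-α)) ∫_a^t u^{(k)}(τ) (t-τ)^{k-α-1} dτ`
of order `α ∈ (k-1,k)` and initial point `a ∈ ℝ ∪ {-∞}`. -/
def caputo (k : ℕ) (α : ℝ) (a : EReal) (u : ℝ → ℝ) (t : ℝ) : ℝ :=
  (1 / Real.Gamma ((k : ℝ) - α)) *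
    ∫ τ in upSet a ∩ Iio t, iteratedDeriv k u τ * (t - τ) ^ ((k : ℝ) - α - 1)

/-- The norm `‖g‖_{C^h([0,1])} = ∑_{j=0}^h sup_{t ∈ [0,1]} |g^{(j)}(t)|`. -/
def chNorm (h : ℕ) (g : ℝ → ℝ) : ℝ :=
  ∑ j ∈ Finset.range (h + 1),
    sSup ((fun t => |iteratedDerivWithin j g (Icc (0 : ℝ) 1) t|) '' Icc (0 : ℝ) 1)

/-- The operator `g ↦ (1/ψ') g'`. -/
def psiDeriv (ψ : ℝ → ℝ) (g : ℝ → ℝ) : ℝ → ℝ := fun τ => (deriv ψ τ)⁻¹ * deriv g τ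

/-- The `ψ`-Caputo derivative
`D_a^{α,ψ} u (t) = (1/Γ(k-α)) ∫_a^t u_ψ^{(k)}(τ) (ψ(t)-ψ(τ))^{k-α-1} ψ'(τ) dτ`
of order `α ∈ (k-1,k)` and initial point `a ∈ ℝ`, where `u_ψ^{(k)} = ((1/ψ') d/dτ)^k u`. -/
def caputoPsi (k : ℕ) (α : ℝ) (ψ : ℝ → ℝ) (a : ℝ) (u : ℝ → ℝ) (t : ℝ) : ℝ :=
  (1 / Real.Gamma ((k : ℝ) - α)) *
    ∫ τ in Ioo a t, (psiDeriv ψ)^[k] u τ * (ψ t - ψ τ) ^ ((k : ℝ) - α - 1) * deriv ψ τ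

end

/-!
The substitution `s = ψ τ` turns `∫_a^t g(ψ τ) ψ'(τ) dτ` into `∫_{ψ a}^{ψ t} g(s) ds`, and the
chain rule gives `(1/ψ') (h ∘ ψ)' = h' ∘ ψ`, so by induction `u_ψ^{(k)} = (u ∘ ψ⁻¹)^{(k)} ∘ ψ`.
No regularity of `u` is needed: `ψ' > 0` makes `ψ` a local diffeomorphism, so `h ∘ ψ` is
differentiable at `τ` exactly when `h` is at `ψ τ`, and the junk value `0` of `deriv` occurs on
both sides of the chain rule at the same points.
-/

open Filter Topology Function

section PositiveDerivative

variable {ψ ψinv : ℝ → ℝ}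

lemma continuous_of_deriv_pos (hψ' : ∀ x, 0 < deriv ψ x) : Continuous ψ :=
  continuous_iff_continuousAt.2 fun x =>
    (differentiableAt_of_deriv_ne_zero (hψ' x).ne').continuousAt

lemma range_mem_nhds_of_deriv_pos (hψ' : ∀ x, 0 < deriv ψ x) (τ : ℝ) : range ψ ∈ 𝓝 (ψ τ) := by
  have hmono := strictMono_of_deriv_pos hψ'
  refine mem_of_superset (Ioo_mem_nhds (hmono (sub_one_lt τ)) (hmono (lt_add_one τ))) ?_
  rw [← (continuous_of_deriv_pos hψ').image_Ioo_of_strictMono hmono]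
  exact image_subset_range _ _

lemma eventually_rightInverse_of_deriv_pos (hψ' : ∀ x, 0 < deriv ψ x)
    (hinv : LeftInverse ψinv ψ) (τ : ℝ) : ∀ᶠ y in 𝓝 (ψ τ), ψ (ψinv y) = y :=
  mem_of_superset (range_mem_nhds_of_deriv_pos hψ' τ) <| by
    rintro _ ⟨x, rfl⟩
    exact congrArg ψ (hinv x)

lemma hasDerivAt_leftInverse_of_deriv_pos (hψ' : ∀ x, 0 < deriv ψ x)
    (hinv : LeftInverse ψinv ψ) (τ : ℝ) : HasDerivAt ψinv (deriv ψ τ)⁻¹ (ψ τ) := by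
  have hmono := strictMono_of_deriv_pos hψ'
  have hrange := range_mem_nhds_of_deriv_pos hψ' τ
  have hinv_mono : MonotoneOn ψinv (range ψ) := by
    rintro _ ⟨x, rfl⟩ _ ⟨y, rfl⟩ hxy
    rw [hinv x, hinv y]
    exact hmono.le_iff_le.1 hxy
  have hinv_cont : ContinuousAt ψinv (ψ τ) :=
    continuousAt_of_monotoneOn_of_image_mem_nhds hinv_mono hrange
      (by rw [← range_comp, hinv.comp_eq_id, range_id]; exact univ_mem)
  have hψτ : HasDerivAt ψ (deriv ψ τ) (ψinv (ψ τ)) := by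
    rw [hinv τ]
    exact (differentiableAt_of_deriv_ne_zero (hψ' τ).ne').hasDerivAt
  exact hψτ.of_local_left_inverse hinv_cont (hψ' τ).ne'
    (eventually_rightInverse_of_deriv_pos hψ' hinv τ)

lemma differentiableAt_comp_iff_of_deriv_pos (hψ' : ∀ x, 0 < deriv ψ x)
    (hinv : LeftInverse ψinv ψ) (h : ℝ → ℝ) (τ : ℝ) :
    DifferentiableAt ℝ (h ∘ ψ) τ ↔ DifferentiableAt ℝ h (ψ τ) := by
  refine ⟨fun hcomp => ?_, fun hh =>
    hh.comp τ (differentiableAt_of_deriv_ne_zero (hψ' τ).ne')⟩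
  have hback : (h ∘ ψ) ∘ ψinv =ᶠ[𝓝 (ψ τ)] h := by
    filter_upwards [eventually_rightInverse_of_deriv_pos hψ' hinv τ] with y hy
    simp only [comp_apply, hy]
  refine (hback.differentiableAt_iff).1 (DifferentiableAt.comp (ψ τ) ?_
    (hasDerivAt_leftInverse_of_deriv_pos hψ' hinv τ).differentiableAt)
  rwa [hinv τ]

lemma deriv_comp_of_deriv_pos (hψ' : ∀ x, 0 < deriv ψ x) (hinv : LeftInverse ψinv ψ)
    (h : ℝ → ℝ) (τ : ℝ) : deriv (h ∘ ψ) τ = deriv h (ψ τ) * deriv ψ τ := by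
  by_cases hh : DifferentiableAt ℝ h (ψ τ)
  · exact deriv_comp τ hh (differentiableAt_of_deriv_ne_zero (hψ' τ).ne')
  · rw [deriv_zero_of_not_differentiableAt hh, zero_mul, deriv_zero_of_not_differentiableAt]
    rwa [differentiableAt_comp_iff_of_deriv_pos hψ' hinv]

lemma psiDeriv_comp_of_deriv_pos (hψ' : ∀ x, 0 < deriv ψ x) (hinv : LeftInverse ψinv ψ)
    (h : ℝ → ℝ) : psiDeriv ψ (h ∘ ψ) = deriv h ∘ ψ := by
  ext τ
  rw [psiDeriv, deriv_comp_of_deriv_pos hψ' hinv, comp_apply]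
  field_simp [(hψ' τ).ne']

lemma psiDeriv_iterate_eq_iteratedDeriv_comp (hψ' : ∀ x, 0 < deriv ψ x)
    (hinv : LeftInverse ψinv ψ) (u : ℝ → ℝ) (n : ℕ) :
    (psiDeriv ψ)^[n] u = iteratedDeriv n (u ∘ ψinv) ∘ ψ := by
  induction n with
  | zero => rw [iterate_zero_apply, iteratedDeriv_zero, comp_assoc, hinv.comp_eq_id, comp_id]
  | succ n ih =>
    rw [iterate_succ_apply', ih, psiDeriv_comp_of_deriv_pos hψ' hinv, iteratedDeriv_succ]

lemma setIntegral_Ioo_comp_mul_deriv_of_deriv_pos (hψ' : ∀ x, 0 < deriv ψ x) (a t : ℝ)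
    (g : ℝ → ℝ) : ∫ τ in Ioo a t, g (ψ τ) * deriv ψ τ = ∫ s in Ioo (ψ a) (ψ t), g s := by
  have hmono := strictMono_of_deriv_pos hψ'
  rw [← (continuous_of_deriv_pos hψ').image_Ioo_of_strictMono hmono,
    integral_image_eq_integral_abs_deriv_smul measurableSet_Ioo
      (fun x _ => (differentiableAt_of_deriv_ne_zero (hψ' x).ne').hasDerivAt.hasDerivWithinAt)
      hmono.injective.injOn]
  refine setIntegral_congr_fun measurableSet_Ioo fun τ _ => ?_
  rw [smul_eq_mul, abs_of_pos (hψ' τ), mul_comm]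

end PositiveDerivative

lemma upSet_coe_inter_Iio (a t : ℝ) : upSet (a : EReal) ∩ Iio t = Ioo a t := by
  ext x
  simp [upSet, EReal.coe_lt_coe_iff]

theorem psi_caputo_change_of_variables_general (k : ℕ) (α : ℝ)
    (a : ℝ) (ψ : ℝ → ℝ) (hψ' : ∀ x : ℝ, 0 < deriv ψ x)
    (ψinv : ℝ → ℝ) (hinv : Function.LeftInverse ψinv ψ)
    (u : ℝ → ℝ) :
    ∀ t : ℝ, a < t →
      caputoPsi k α ψ a u t = caputo k α ((ψ a : ℝ) : EReal) (u ∘ ψinv) (ψ t) := by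
  intro t _
  rw [caputoPsi, caputo, upSet_coe_inter_Iio, psiDeriv_iterate_eq_iteratedDeriv_comp hψ' hinv u k,
    ← setIntegral_Ioo_comp_mul_deriv_of_deriv_pos hψ' a t]
  rfl

/-- the `ψ`-Caputo derivative is the Caputo derivative of `u ∘ ψ⁻¹`
after the change of variables induced by `ψ` (Lemma 3.1 of the paper). -/
theorem psi_caputo_change_of_variables (k : ℕ) (hk : 1 ≤ k) (α : ℝ)
    (hα : α ∈ Set.Ioo ((k : ℝ) - 1) (k : ℝ))
    (a : ℝ) (ψ : ℝ → ℝ) (hψ : ContDiff ℝ k ψ) (hψ' : ∀ x : ℝ, 0 < deriv ψ x)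
    (ψinv : ℝ → ℝ) (hinv : Function.LeftInverse ψinv ψ)
    (u : ℝ → ℝ) (hu : CkBeta k α ((ψ a : ℝ) : EReal) (u ∘ ψinv)) :
    ∀ t : ℝ, a < t →
      caputoPsi k α ψ a u t = caputo k α ((ψ a : ℝ) : EReal) (u ∘ ψinv) (ψ t) :=
  psi_caputo_change_of_variables_general k α a ψ hψ' ψinv hinv u
end

section
/- Let k ∈ ℕ with k ≥ 1 and α ∈ (k−1, k). Let a ∈ ℝ ∪ {−∞}, b ∈ (a,+∞), and let I be an interval compactly contained in (b,+∞). Assume u ∈ C^{k,α}_b and define u⋆(t) := u(t) for t ∈ [b,+∞) and u⋆(t) := Σ_{j=0}^{k−1} (u^{(j)}(b)/j!)(t−b)^j for t ∈ (−∞, b) (the Taylor polynomial of u at b of degree k−1). Then u⋆ ∈ C^{k,α}_a and D^α_a u⋆(t) = D^α_b u(t) for every t ∈ I. -/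
/-!
Below `b` the extension `u⋆` is a polynomial of degree `< k`, so its `k`-th derivative vanishes
there and the Caputo integrand of `u⋆` with initial point `a` is, almost everywhere, that of `u`
with initial point `b`, extended by zero. The regularity `u⋆ ∈ AC^{k-1}` is a gluing statement:
the Taylor polynomial matches the one-sided derivatives of `u` at `b` up to order `k - 1`, so the
iterated derivatives of `u⋆` are the Taylor ones on the left and those of `u` on the right, and the
fundamental theorem of calculus on each side combines across `b`.
-/

open MeasureTheory Set

open Filter Topology intervalIntegral
open scoped Interval

lemma upSet_coe (b : ℝ) : upSet (b : EReal) = Ioi b := by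
  ext τ; exact EReal.coe_lt_coe_iff

lemma upBar_coe (b : ℝ) : upBar (b : EReal) = Ici b := by
  ext τ; exact EReal.coe_le_coe_iff

lemma ordConnected_upBar (a : EReal) : (upBar a).OrdConnected :=
  ⟨fun _ hx _ _ _ hz => hx.trans (EReal.coe_le_coe_iff.mpr hz.1)⟩

lemma upSet_inter_Iio_inter_Ioi {a : EReal} {b : ℝ} (hab : a < b) (t : ℝ) :
    upSet a ∩ Iio t ∩ Ioi b = upSet b ∩ Iio t := by
  rw [upSet_coe]
  ext τ
  refine ⟨fun ⟨⟨_, hτt⟩, hbτ⟩ => ⟨hbτ, hτt⟩, fun ⟨hbτ, hτt⟩ => ⟨⟨?_, hτt⟩, hbτ⟩⟩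
  exact hab.trans (EReal.coe_lt_coe_iff.mpr hbτ)

lemma Set.OrdConnected.uniqueDiffOn {s : Set ℝ} (hs : s.OrdConnected) {x y : ℝ} (hx : x ∈ s)
    (hy : y ∈ s) (hxy : x < y) : UniqueDiffOn ℝ s := by
  refine uniqueDiffOn_convex (convex_iff_ordConnected.mpr hs) ⟨(x + y) / 2, ?_⟩
  refine interior_mono (Ioo_subset_Icc_self.trans (hs.out hx hy)) ?_
  rw [interior_Ioo]
  constructor <;> linarith

lemma iteratedDerivWithin_congr_set {𝕜 F : Type*} [NontriviallyNormedField 𝕜]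
    [NormedAddCommGroup F] [NormedSpace 𝕜 F] {f : 𝕜 → F} {s t : Set 𝕜} {x : 𝕜}
    (h : s =ᶠ[𝓝 x] t) (n : ℕ) :
    iteratedDerivWithin n f s x = iteratedDerivWithin n f t x := by
  simp only [iteratedDerivWithin_eq_iteratedFDerivWithin, iteratedFDerivWithin_congr_set h]

def IsPrimitiveOn (F f : ℝ → ℝ) (s : Set ℝ) : Prop :=
  ∀ x ∈ s, ∀ y ∈ s, IntervalIntegrable f volume x y ∧ F y - F x = ∫ τ in x..y, f τ

namespace IsPrimitiveOn

variable {F G f g : ℝ → ℝ} {s : Set ℝ}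

lemma mono (h : IsPrimitiveOn F f s) {t : Set ℝ} (hts : t ⊆ s) : IsPrimitiveOn F f t :=
  fun x hx y hy => h x (hts hx) y (hts hy)

lemma congr (h : IsPrimitiveOn F f s) (hs : s.OrdConnected) (hF : EqOn F G s)
    (hf : ∀ᵐ τ, τ ∈ s → f τ = g τ) : IsPrimitiveOn G g s := by
  intro x hx y hy
  have hfg : ∀ᵐ τ, τ ∈ Ι x y → f τ = g τ :=
    hf.mono fun τ hτ hmem => hτ (hs.uIcc_subset hx hy (uIoc_subset_uIcc hmem))
  obtain ⟨hint, heq⟩ := h x hx y hy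
  refine ⟨hint.congr_ae ((ae_restrict_iff' measurableSet_uIoc).mpr hfg), ?_⟩
  rw [← hF hx, ← hF hy, heq, integral_congr_ae hfg]

lemma of_le (h : ∀ x ∈ s, ∀ y ∈ s, x ≤ y →
    IntervalIntegrable f volume x y ∧ F y - F x = ∫ τ in x..y, f τ) : IsPrimitiveOn F f s := by
  intro x hx y hy
  rcases le_total x y with hxy | hyx
  · exact h x hx y hy hxy
  · obtain ⟨hint, heq⟩ := h y hy x hx hyx
    exact ⟨hint.symm, by rw [integral_symm, ← heq, neg_sub]⟩

lemma union_Iic_Ici (hs : s.OrdConnected) (b : ℝ) (hl : IsPrimitiveOn F f (s ∩ Iic b))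
    (hr : IsPrimitiveOn F f (s ∩ Ici b)) : IsPrimitiveOn F f s := by
  refine of_le fun x hx y hy hxy => ?_
  rcases le_total y b with hyb | hby
  · exact hl x ⟨hx, hxy.trans hyb⟩ y ⟨hy, hyb⟩
  rcases le_total b x with hbx | hxb
  · exact hr x ⟨hx, hbx⟩ y ⟨hy, hbx.trans hxy⟩
  have hb : b ∈ s := hs.out hx hy ⟨hxb, hby⟩
  obtain ⟨hint₁, heq₁⟩ := hl x ⟨hx, hxb⟩ b ⟨hb, self_mem_Iic⟩
  obtain ⟨hint₂, heq₂⟩ := hr b ⟨hb, self_mem_Ici⟩ y ⟨hy, hby⟩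
  refine ⟨hint₁.trans hint₂, ?_⟩
  rw [← integral_add_adjacent_intervals hint₁ hint₂, ← heq₁, ← heq₂, sub_add_sub_cancel']

lemma of_hasDerivAt (hF : ∀ x, HasDerivAt F (f x) x) (hf : Continuous f) (s : Set ℝ) :
    IsPrimitiveOn F f s := fun x _ y _ =>
  ⟨hf.intervalIntegrable x y,
    (integral_eq_sub_of_hasDerivAt (fun τ _ => hF τ) (hf.intervalIntegrable x y)).symm⟩

variable {b t : ℝ}

lemma continuousOn_Icc (h : IsPrimitiveOn F f (Icc b t)) (hbt : b ≤ t) :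
    ContinuousOn F (Icc b t) := by
  have hb : b ∈ Icc b t := left_mem_Icc.mpr hbt
  have hprim := continuousOn_primitive_interval' (h b hb t (right_mem_Icc.mpr hbt)).1
    left_mem_uIcc
  rw [uIcc_of_le hbt] at hprim
  refine ContinuousOn.congr (f := fun y => F b + ∫ τ in b..y, f τ)
    (continuousOn_const.add hprim) fun y hy => ?_
  dsimp only
  rw [← (h b hb y hy).2, add_sub_cancel]

lemma hasDerivWithinAt_Icc (h : IsPrimitiveOn F f (Icc b t)) (hbt : b < t)
    (hf : ContinuousWithinAt f (Icc b t) b) : HasDerivWithinAt F (f b) (Icc b t) b := by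
  have hb : b ∈ Icc b t := left_mem_Icc.mpr hbt.le
  have hmeas : StronglyMeasurableAtFilter f (𝓝[Ioi b] b) :=
    ⟨Icc b t, Icc_mem_nhdsGT hbt, ((intervalIntegrable_iff_integrableOn_Icc_of_le hbt.le).mp
      (h b hb t (right_mem_Icc.mpr hbt.le)).1).aestronglyMeasurable⟩
  have hprim : HasDerivWithinAt (fun y => ∫ τ in b..y, f τ) (f b) (Ici b) b :=
    integral_hasDerivWithinAt_right IntervalIntegrable.refl hmeas
      (hf.mono_of_mem_nhdsWithin (Icc_mem_nhdsGT hbt))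
  refine ((hprim.const_add (F b)).mono Icc_subset_Ici_self).congr (fun y hy => ?_) ?_
  · rw [← (h b hb y hy).2, add_sub_cancel]
  · rw [integral_same, add_zero]

end IsPrimitiveOn

lemma ContDiff.isPrimitiveOn_iteratedDeriv {k j : ℕ} {P : ℝ → ℝ} (hP : ContDiff ℝ k P)
    (hj : j < k) (s : Set ℝ) :
    IsPrimitiveOn (iteratedDeriv j P) (iteratedDeriv (j + 1) P) s := by
  refine IsPrimitiveOn.of_hasDerivAt (fun x => ?_)
    (hP.continuous_iteratedDeriv (j + 1) (by exact_mod_cast hj)) s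
  rw [iteratedDeriv_succ]
  exact ((hP.differentiable_iteratedDeriv j (by exact_mod_cast hj)) x).hasDerivAt

section ACkOn

variable {k : ℕ} {f g : ℝ → ℝ} {s : Set ℝ}

lemma ACkOn.isPrimitiveOn (h : ACkOn k f s) {j : ℕ} (hj : j < k) :
    IsPrimitiveOn (iteratedDerivWithin j f s) (iteratedDerivWithin (j + 1) f s) s :=
  h j hj

lemma ACkOn.congr (h : ACkOn k f s) (hs : s.OrdConnected) (hfg : EqOn f g s) : ACkOn k g s :=
  fun _ hj => (h.isPrimitiveOn hj).congr hs (iteratedDerivWithin_congr hfg)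
    (ae_of_all _ fun _ hx => iteratedDerivWithin_congr hfg hx)

lemma ContDiff.ackOn (hf : ContDiff ℝ k f) (hs : s.OrdConnected) (hud : UniqueDiffOn ℝ s) :
    ACkOn k f s := by
  have heq : ∀ j ≤ k, EqOn (iteratedDeriv j f) (iteratedDerivWithin j f s) s := fun j hj x hx =>
    (iteratedDerivWithin_eq_iteratedDeriv hud (hf.contDiffAt.of_le (by exact_mod_cast hj)) hx).symm
  exact fun j hj => (hf.isPrimitiveOn_iteratedDeriv hj s).congr hs (heq j hj.le)
    (ae_of_all _ fun _ hx => heq (j + 1) hj hx)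

end ACkOn

noncomputable def taylorPoly (k : ℕ) (d : ℕ → ℝ) (b x : ℝ) : ℝ :=
  ∑ j ∈ Finset.range k, d j / (Nat.factorial j) * (x - b) ^ j

section taylorPoly

variable (k : ℕ) (d : ℕ → ℝ) (b : ℝ)

lemma contDiff_taylorPoly {n : WithTop ℕ∞} : ContDiff ℝ n (taylorPoly k d b) := by
  unfold taylorPoly
  fun_prop

lemma iteratedDeriv_taylorPoly (m : ℕ) (x : ℝ) :
    iteratedDeriv m (taylorPoly k d b) x =
      ∑ j ∈ Finset.range k, d j / (Nat.factorial j) * (j.descFactorial m * (x - b) ^ (j - m)) := by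
  unfold taylorPoly
  rw [iteratedDeriv_fun_sum fun j _ => by fun_prop]
  refine Finset.sum_congr rfl fun j _ => ?_
  rw [iteratedDeriv_const_mul_field, iteratedDeriv_comp_sub_const m (· ^ j)]
  exact congrArg _ (iteratedDeriv_pow j m)

lemma iteratedDeriv_taylorPoly_self {m : ℕ} (hm : m < k) :
    iteratedDeriv m (taylorPoly k d b) b = d m := by
  rw [iteratedDeriv_taylorPoly, Finset.sum_eq_single_of_mem m (Finset.mem_range.mpr hm)]
  · rw [Nat.descFactorial_self, sub_self, Nat.sub_self, pow_zero, mul_one,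
      div_mul_cancel₀ _ (by positivity)]
  · intro j _ hjm
    rcases hjm.lt_or_gt with hlt | hgt
    · rw [Nat.descFactorial_eq_zero_iff_lt.mpr hlt, Nat.cast_zero, zero_mul, mul_zero]
    · rw [sub_self, zero_pow (Nat.sub_ne_zero_of_lt hgt), mul_zero, mul_zero]

lemma iteratedDeriv_taylorPoly_eq_zero : iteratedDeriv k (taylorPoly k d b) = 0 := by
  funext x
  rw [iteratedDeriv_taylorPoly]
  refine Finset.sum_eq_zero fun j hj => ?_
  rw [Nat.descFactorial_eq_zero_iff_lt.mpr (Finset.mem_range.mp hj), Nat.cast_zero, zero_mul,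
    mul_zero]

end taylorPoly

section Gluing

variable {k : ℕ} {f P : ℝ → ℝ} {s : Set ℝ} {b t τ : ℝ}

lemma iteratedDerivWithin_ite_of_lt (hs : UniqueDiffOn ℝ s) (hτ : τ ∈ s) (hτb : τ < b) {m : ℕ}
    (hP : ContDiffAt ℝ m P τ) :
    iteratedDerivWithin m (fun x => if b ≤ x then f x else P x) s τ = iteratedDeriv m P τ := by
  have hev : (fun x => if b ≤ x then f x else P x) =ᶠ[𝓝[s] τ] P :=
    eventually_nhdsWithin_of_eventually_nhds <|
      eventually_of_mem (Iio_mem_nhds hτb) fun x hx => if_neg (not_le.mpr hx)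
  rw [hev.iteratedDerivWithin_eq (if_neg (not_le.mpr hτb)),
    iteratedDerivWithin_eq_iteratedDeriv hs hP hτ]

lemma iteratedDerivWithin_ite_of_gt (hst : s ⊆ Iic t) (hIcc : Icc b t ⊆ s) (hbτ : b < τ)
    (m : ℕ) :
    iteratedDerivWithin m (fun x => if b ≤ x then f x else P x) s τ =
      iteratedDerivWithin m f (Icc b t) τ := by
  have hev : (fun x => if b ≤ x then f x else P x) =ᶠ[𝓝[s] τ] f :=
    eventually_nhdsWithin_of_eventually_nhds <|
      eventually_of_mem (Ioi_mem_nhds hbτ) fun x hx => if_pos (le_of_lt hx)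
  have hset : s =ᶠ[𝓝 τ] Icc b t := eventuallyEq_set.mpr <|
    eventually_of_mem (Ioi_mem_nhds hbτ) fun x hx => ⟨fun h => ⟨le_of_lt hx, hst h⟩, (hIcc ·)⟩
  rw [hev.iteratedDerivWithin_eq (if_pos hbτ.le), iteratedDerivWithin_congr_set hset]

/-- At `b` the left derivative comes from `P` and the right one from `f` (whose derivatives of
order `< k - 1` are primitives of continuous functions, hence right-differentiable), and `hPf`
makes them agree. -/
lemma iteratedDerivWithin_ite_self (hbt : b < t) (hs : s.OrdConnected) (hbs : b ∈ s)
    (hts : t ∈ s) (hst : s ⊆ Iic t) (hP : ContDiff ℝ k P) (hf : ACkOn k f (Icc b t))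
    (hPf : ∀ j < k, iteratedDeriv j P b = iteratedDerivWithin j f (Icc b t) b) :
    ∀ m < k, iteratedDerivWithin m (fun x => if b ≤ x then f x else P x) s b =
      iteratedDerivWithin m f (Icc b t) b := by
  set g : ℝ → ℝ := fun x => if b ≤ x then f x else P x
  have hud : UniqueDiffOn ℝ s := hs.uniqueDiffOn hbs hts hbt
  intro m hm
  induction m with
  | zero => simp only [iteratedDerivWithin_zero, g, if_pos le_rfl]
  | succ m ih =>
    have ih := ih (by omega)
    have hleft : EqOn (iteratedDerivWithin m g s) (iteratedDeriv m P) (s ∩ Iic b) := by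
      rintro τ ⟨hτ, hτb⟩
      rcases (mem_Iic.mp hτb).lt_or_eq with hlt | rfl
      · exact iteratedDerivWithin_ite_of_lt hud hτ hlt
          (hP.contDiffAt.of_le (by exact_mod_cast (by omega : m ≤ k)))
      · rw [ih, hPf m (by omega)]
    have hright : EqOn (iteratedDerivWithin m g s) (iteratedDerivWithin m f (Icc b t))
        (s ∩ Ici b) := by
      rintro τ ⟨-, hbτ⟩
      rcases (mem_Ici.mp hbτ).lt_or_eq with hlt | rfl
      · exact iteratedDerivWithin_ite_of_gt hst (hs.out hbs hts) hlt m
      · exact ih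
    have hderivL : HasDerivWithinAt (iteratedDerivWithin m g s)
        (iteratedDerivWithin (m + 1) f (Icc b t) b) (s ∩ Iic b) b := by
      rw [← hPf (m + 1) hm, iteratedDeriv_succ]
      exact ((hP.differentiable_iteratedDeriv m (by exact_mod_cast (by omega : m < k)))
        b).hasDerivAt.hasDerivWithinAt.congr hleft (hleft ⟨hbs, self_mem_Iic⟩)
    have hderivR : HasDerivWithinAt (iteratedDerivWithin m g s)
        (iteratedDerivWithin (m + 1) f (Icc b t) b) (s ∩ Ici b) b := by
      have hcont := (hf.isPrimitiveOn hm).continuousOn_Icc hbt.le b (left_mem_Icc.mpr hbt.le)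
      exact (((hf.isPrimitiveOn (by omega)).hasDerivWithinAt_Icc hbt hcont).mono
        fun x hx => ⟨hx.2, hst hx.1⟩).congr hright (hright ⟨hbs, self_mem_Ici⟩)
    have hsplit : s ∩ Iic b ∪ s ∩ Ici b = s := by
      rw [← inter_union_distrib_left, Iic_union_Ici, inter_univ]
    rw [iteratedDerivWithin_succ]
    exact (hsplit ▸ hderivL.union hderivR).derivWithin (hud b hbs)

theorem ACkOn.ite_of_contDiff (hbt : b < t) (hs : s.OrdConnected) (hbs : b ∈ s) (hts : t ∈ s)
    (hst : s ⊆ Iic t) (hP : ContDiff ℝ k P) (hf : ACkOn k f (Icc b t))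
    (hPf : ∀ j < k, iteratedDeriv j P b = iteratedDerivWithin j f (Icc b t) b) :
    ACkOn k (fun x => if b ≤ x then f x else P x) s := by
  set g : ℝ → ℝ := fun x => if b ≤ x then f x else P x
  have hud : UniqueDiffOn ℝ s := hs.uniqueDiffOn hbs hts hbt
  have hleft : ∀ m ≤ k, ∀ τ ∈ s, τ < b → iteratedDeriv m P τ = iteratedDerivWithin m g s τ :=
    fun m hm τ hτ hτb => (iteratedDerivWithin_ite_of_lt hud hτ hτb
      (hP.contDiffAt.of_le (by exact_mod_cast hm))).symm
  have hright : ∀ m, ∀ τ, b < τ → iteratedDerivWithin m f (Icc b t) τ =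
      iteratedDerivWithin m g s τ :=
    fun m τ hbτ => (iteratedDerivWithin_ite_of_gt hst (hs.out hbs hts) hbτ m).symm
  have hself := iteratedDerivWithin_ite_self hbt hs hbs hts hst hP hf hPf
  intro j hj
  refine IsPrimitiveOn.union_Iic_Ici hs b ?_ ?_
  · refine (hP.isPrimitiveOn_iteratedDeriv hj _).congr (hs.inter ordConnected_Iic) ?_ ?_
    · rintro τ ⟨hτ, hτb⟩
      rcases (mem_Iic.mp hτb).lt_or_eq with hlt | rfl
      · exact hleft j hj.le τ hτ hlt
      · rw [hself j hj, hPf j hj]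
    · filter_upwards [Measure.ae_ne volume b] with τ hτb hτ
      exact hleft (j + 1) hj τ hτ.1 (lt_of_le_of_ne hτ.2 hτb)
  · refine ((hf.isPrimitiveOn hj).mono fun x hx => ⟨hx.2, hst hx.1⟩).congr
      (hs.inter ordConnected_Ici) ?_ ?_
    · rintro τ ⟨-, hbτ⟩
      rcases (mem_Ici.mp hbτ).lt_or_eq with hlt | rfl
      · exact hright j τ hlt
      · exact (hself j hj).symm
    · filter_upwards [Measure.ae_ne volume b] with τ hτb hτ
      exact hright (j + 1) τ (lt_of_le_of_ne hτ.2 hτb.symm)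

end Gluing

lemma ackOn_ite_taylorPoly {k : ℕ} {u : ℝ → ℝ} {a : EReal} {b t : ℝ} (hk : 1 ≤ k)
    (hab : a < b) (ht : a < t) (hu : ∀ t' : ℝ, b < t' → ACkOn k u (Icc b t')) :
    ACkOn k (fun x => if b ≤ x then u x
      else taylorPoly k (fun j => iteratedDerivWithin j u (Ici b) b) b x) (upBar a ∩ Iic t) := by
  set d : ℕ → ℝ := fun j => iteratedDerivWithin j u (Ici b) b
  have hs : (upBar a ∩ Iic t).OrdConnected := (ordConnected_upBar a).inter ordConnected_Iic
  have hts : t ∈ upBar a ∩ Iic t := ⟨ht.le, self_mem_Iic⟩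
  rcases le_or_gt t b with htb | hbt
  · obtain ⟨x, hax, hxt⟩ := EReal.exists_between_coe_real ht
    have hud := hs.uniqueDiffOn ⟨hax.le, EReal.coe_le_coe_iff.mp hxt.le⟩ hts
      (EReal.coe_lt_coe_iff.mp hxt)
    refine ((contDiff_taylorPoly k d b).ackOn hs hud).congr hs fun τ hτ => ?_
    rcases (hτ.2.trans htb).lt_or_eq with hlt | rfl
    · exact (if_neg (not_le.mpr hlt)).symm
    -- at `τ = b` the extension takes the value `u b`, the constant term of `taylorPoly` as `1 ≤ k`
    · simpa [d] using iteratedDeriv_taylorPoly_self k d τ hk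
  · refine ACkOn.ite_of_contDiff hbt hs ⟨hab.le, hbt.le⟩ hts
      (fun _ h => h.2) (contDiff_taylorPoly k d b) (hu t hbt) fun j hj => ?_
    rw [iteratedDeriv_taylorPoly_self k d b hj]
    have hset : Ici b =ᶠ[𝓝 b] Icc b t := eventuallyEq_set.mpr <|
      eventually_of_mem (Iio_mem_nhds hbt) fun x hx => ⟨fun h => ⟨h, le_of_lt hx⟩, fun h => h.1⟩
    exact iteratedDerivWithin_congr_set hset j

lemma iteratedDeriv_ite_ae_eq_indicator {k : ℕ} {f P : ℝ → ℝ} {b : ℝ}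
    (hP : iteratedDeriv k P = 0) :
    iteratedDeriv k (fun x => if b ≤ x then f x else P x) =ᵐ[volume]
      (Ioi b).indicator (iteratedDeriv k f) := by
  filter_upwards [Measure.ae_ne volume b] with τ hτb
  rcases hτb.lt_or_gt with hlt | hgt
  · rw [indicator_of_notMem (notMem_Ioi.mpr hlt.le)]
    exact (EventuallyEq.iteratedDeriv_eq k (eventually_of_mem (Iio_mem_nhds hlt)
      fun x hx => if_neg (not_le.mpr hx))).trans (congrFun hP τ)
  · rw [indicator_of_mem (mem_Ioi.mpr hgt)]
    exact EventuallyEq.iteratedDeriv_eq k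
      (eventually_of_mem (Ioi_mem_nhds hgt) fun x hx => if_pos (le_of_lt hx))

theorem caputo_taylor_extension_general (k : ℕ) (hk : 1 ≤ k) (α : ℝ)
    (a : EReal) (b : ℝ) (hab : a < (b : EReal))
    (I : Set ℝ)
    (u : ℝ → ℝ) (hu : CkBeta k α (b : EReal) u) :
    CkBeta k α a (fun t => if b ≤ t then u t
      else ∑ j ∈ Finset.range k,
        iteratedDerivWithin j u (upBar (b : EReal)) b / (Nat.factorial j) * (t - b) ^ j) ∧
    ∀ t ∈ I,
      caputo k α a (fun t => if b ≤ t then u t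
        else ∑ j ∈ Finset.range k,
          iteratedDerivWithin j u (upBar (b : EReal)) b / (Nat.factorial j) * (t - b) ^ j) t =
      caputo k α (b : EReal) u t := by
  simp only [upBar_coe]
  set d : ℕ → ℝ := fun j => iteratedDerivWithin j u (Ici b) b
  change CkBeta k α a (fun x => if b ≤ x then u x else taylorPoly k d b x) ∧
    ∀ t ∈ I, caputo k α a (fun x => if b ≤ x then u x else taylorPoly k d b x) t = caputo k α b u t
  have hΘ : ∀ t : ℝ, (fun τ => iteratedDeriv k (fun x => if b ≤ x then u x
      else taylorPoly k d b x) τ * (t - τ) ^ ((k : ℝ) - α - 1)) =ᵐ[volume]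
      (Ioi b).indicator (fun τ => iteratedDeriv k u τ * (t - τ) ^ ((k : ℝ) - α - 1)) :=
    fun t => (iteratedDeriv_ite_ae_eq_indicator (f := u)
      (iteratedDeriv_taylorPoly_eq_zero k d b)).mono fun τ hτ => by
        dsimp only
        rw [hτ, indicator_mul_left]
  refine ⟨fun t ht => ⟨ackOn_ite_taylorPoly hk hab ht fun t' ht' => ?_, ?_⟩, fun t _ => ?_⟩
  · simpa [upBar_coe, Ici_inter_Iic] using (hu t' (EReal.coe_lt_coe_iff.mpr ht')).1
  · rw [integrableOn_congr_fun_ae (ae_restrict_of_ae (hΘ t)),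
      integrableOn_indicator_iff measurableSet_Ioi, inter_comm, upSet_inter_Iio_inter_Ioi hab]
    rcases le_or_gt t b with htb | hbt
    · rw [upSet_coe, Ioi_inter_Iio, Ioo_eq_empty (not_lt.mpr htb)]
      exact integrableOn_empty
    · exact (hu t (EReal.coe_lt_coe_iff.mpr hbt)).2
  · rw [caputo, caputo, integral_congr_ae (ae_restrict_of_ae (hΘ t)),
      setIntegral_indicator measurableSet_Ioi, upSet_inter_Iio_inter_Ioi hab]

/-- extending a function of `C^{k,α}_b` below `b` by its Taylor polynomial
of degree `k-1` at `b` produces a function of `C^{k,α}_a`, whose Caputo derivative with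
initial point `a` agrees with that of the original function with initial point `b` on
any interval compactly contained in `(b,+∞)` (Lemma A.3 of the paper). -/
theorem caputo_taylor_extension (k : ℕ) (hk : 1 ≤ k) (α : ℝ)
    (hα : α ∈ Set.Ioo ((k : ℝ) - 1) (k : ℝ))
    (a : EReal) (b : ℝ) (hab : a < (b : EReal))
    (I : Set ℝ) (hIint : I.OrdConnected) (hIbdd : Bornology.IsBounded I)
    (hIcpt : closure I ⊆ Set.Ioi b)
    (u : ℝ → ℝ) (hu : CkBeta k α (b : EReal) u) :
    CkBeta k α a (fun t => if b ≤ t then u t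
      else ∑ j ∈ Finset.range k,
        iteratedDerivWithin j u (upBar (b : EReal)) b / (Nat.factorial j) * (t - b) ^ j) ∧
    ∀ t ∈ I,
      caputo k α a (fun t => if b ≤ t then u t
        else ∑ j ∈ Finset.range k,
          iteratedDerivWithin j u (upBar (b : EReal)) b / (Nat.factorial j) * (t - b) ^ j) t =
      caputo k α (b : EReal) u t :=
  caputo_taylor_extension_general k hk α a b hab I u hu
end
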